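/- Let n ≥ 0 and let w be a reduced word using letters from {1,…,n} and placeholders. Among all words obtained from w by inserting the letter n+1 at some position, the word obtained by inserting n+1 immediately to the right of the rightmost placeholder of w (if w contains a placeholder) and at the left end of w (otherwise) is the unique minimal one with respect to the right-to-left lexicographic order in which ε is greater than every letter. (This identifies the two descriptions of the insertion maps f_n^i: the minimal-order-type description and the explicit insertion rule.) -/

import Mathlib

/-- A word: a finite sequence of letters (`some a` for a positive integer `a`) and
placeholders (`none` for `ε`), written left to right (and read right to left). -/
abbrev Word : Type := List (Option ℕ+)

/-- A word is reduced if it has no two consecutive placeholders. -/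
def WordReduced (w : Word) : Prop :=
  List.Chain' (fun a b => ¬(a = none ∧ b = none)) w

/-- Auxiliary insertion, acting on the reversed (reading-order) word: insert the
letter `x` immediately before the first placeholder, or at the very end if there
is no placeholder. -/
def insertAux (x : ℕ+) : List (Option ℕ+) → List (Option ℕ+)
  | [] => [some x]
  | none :: rest => some x :: none :: rest
  | a :: rest => a :: insertAux x rest

/-- Insert the letter `x` into a word: immediately to the right of the rightmost
placeholder if the word contains one, and at the left end otherwise. -/
def insertLetter (x : ℕ+) (w : Word) : Word :=
  (insertAux x w.reverse).reverse

/-- The order on symbols: letters are ordered as integers, and the placeholder `ε`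
is greater than every letter. -/
def SymbLt : Option ℕ+ → Option ℕ+ → Prop
  | some a, some b => a < b
  | some _, none => True
  | none, _ => False

/-- The right-to-left lexicographic order on words. -/
def WordLt (w w' : Word) : Prop :=
  List.Lex SymbLt w.reverse w'.reverse

/-! Read from the right, `insertLetter` puts the new letter `x` just before the first
placeholder, or at the end if there is none. For any other insertion point, the two words first
differ at a position where either the optimal word has a letter and the other one the maximal
symbol `ε` (insertion further on), or the optimal word has an old letter `a < x` and the other
one already `x` (insertion earlier). -/

theorem List.reverse_take_append_cons_drop {α : Type*} (l : List α) (x : α) (p : ℕ) :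
    (l.take p ++ x :: l.drop p).reverse =
      l.reverse.take (l.length - p) ++ x :: l.reverse.drop (l.length - p) := by
  rw [List.reverse_append, List.reverse_cons, List.reverse_drop, List.reverse_take]
  simp

theorem exists_insertAux_eq_take_append_drop (x : ℕ+) (v : List (Option ℕ+)) :
    ∃ q ≤ v.length, insertAux x v = v.take q ++ some x :: v.drop q := by
  induction v with
  | nil => exact ⟨0, le_rfl, rfl⟩
  | cons a rest ih =>
    cases a with
    | none => exact ⟨0, Nat.zero_le _, rfl⟩
    | some b =>
      obtain ⟨q, hq, heq⟩ := ih
      exact ⟨q + 1, Nat.succ_le_succ hq, by simp [insertAux, heq]⟩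

theorem lex_insertAux_take_append_drop (x : ℕ+) (v : List (Option ℕ+))
    (hv : ∀ a : ℕ+, some a ∈ v → a < x) (q : ℕ)
    (hne : v.take q ++ some x :: v.drop q ≠ insertAux x v) :
    List.Lex SymbLt (insertAux x v) (v.take q ++ some x :: v.drop q) := by
  induction v generalizing q with
  | nil => exact absurd (by cases q <;> rfl) hne
  | cons a rest ih =>
    cases q with
    | zero =>
      cases a with
      | none => exact absurd rfl hne
      | some b => exact List.Lex.rel (hv b List.mem_cons_self)
    | succ q =>
      cases a with
      | none => exact List.Lex.rel trivial
      | some b =>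
        refine List.Lex.cons (ih (fun a ha => hv a (List.mem_cons_of_mem _ ha)) q ?_)
        intro h
        exact hne (by simp [insertAux, h])

theorem stmt_14_general (n : ℕ) (w : Word)
    (hletters : ∀ a : ℕ+, some a ∈ w → (a : ℕ) ≤ n) :
    (∃ p ≤ w.length,
        insertLetter ⟨n + 1, Nat.succ_pos n⟩ w =
          w.take p ++ some ⟨n + 1, Nat.succ_pos n⟩ :: w.drop p) ∧
      ∀ p ≤ w.length,
        w.take p ++ some ⟨n + 1, Nat.succ_pos n⟩ :: w.drop p ≠
            insertLetter ⟨n + 1, Nat.succ_pos n⟩ w →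
          WordLt (insertLetter ⟨n + 1, Nat.succ_pos n⟩ w)
            (w.take p ++ some ⟨n + 1, Nat.succ_pos n⟩ :: w.drop p) := by
  set x : ℕ+ := ⟨n + 1, Nat.succ_pos n⟩
  have hlt : ∀ a : ℕ+, some a ∈ w.reverse → a < x := fun a ha =>
    Nat.lt_succ_of_le (hletters a (List.mem_reverse.mp ha))
  constructor
  · obtain ⟨q, hq, heq⟩ := exists_insertAux_eq_take_append_drop x w.reverse
    rw [List.length_reverse] at hq
    refine ⟨w.length - q, Nat.sub_le _ _, List.reverse_injective ?_⟩
    rw [insertLetter, List.reverse_reverse, heq, List.reverse_take_append_cons_drop,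
      Nat.sub_sub_self hq]
  · intro p _ hne
    rw [WordLt, insertLetter, List.reverse_reverse, List.reverse_take_append_cons_drop]
    refine lex_insertAux_take_append_drop x w.reverse hlt _ fun h => hne ?_
    rw [insertLetter, ← h, ← List.reverse_take_append_cons_drop, List.reverse_reverse]

/-- Let `n ≥ 0` and let `w` be a reduced word using letters from
`{1, …, n}` and placeholders. Among all words obtained from `w` by inserting the letter
`n+1` at some position, the word `insertLetter (n+1) w` — obtained by inserting `n+1`
immediately to the right of the rightmost placeholder of `w` if `w` contains one, and at
the left end of `w` otherwise — is one of them, and it is the unique minimal one with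
respect to the right-to-left lexicographic order in which `ε` is greater than every
letter. -/
theorem stmt_14 (n : ℕ) (w : Word) (hred : WordReduced w)
    (hletters : ∀ a : ℕ+, some a ∈ w → (a : ℕ) ≤ n) :
    (∃ p ≤ w.length,
        insertLetter ⟨n + 1, Nat.succ_pos n⟩ w =
          w.take p ++ some ⟨n + 1, Nat.succ_pos n⟩ :: w.drop p) ∧
      ∀ p ≤ w.length,
        w.take p ++ some ⟨n + 1, Nat.succ_pos n⟩ :: w.drop p ≠
            insertLetter ⟨n + 1, Nat.succ_pos n⟩ w →
          WordLt (insertLetter ⟨n + 1, Nat.succ_pos n⟩ w)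
            (w.take p ++ some ⟨n + 1, Nat.succ_pos n⟩ :: w.drop p) :=
  stmt_14_general n w hletters
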